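/- Let $n_1, n_2$ be positive integers, $r \geq 0$, and $j \geq 1$. With $S(n_1, n_2; r, j, q) = \frac{1}{[n_1]}\binom{n_1+n_2}{n_1}_q^{-1} \sum_{k=1}^{n_1} [2k][k]^{2r} q^{jk^2-(r+1)k}\binom{n_1+n_2}{n_1+k}_q \binom{n_1+n_2}{n_2+k}_q$ and $S(l; r, j', q) = \frac{1}{[l]}\binom{2l}{l}_q^{-1}\sum_{k=1}^{l}[2k][k]^{2r}q^{j'k^2-(r+1)k}\binom{2l}{l+k}_q$, there holds $S(n_1, n_2; r, j, q) = \sum_{l=1}^{n_1} q^{l^2} \binom{n_1-1}{l-1}_q \binom{n_2}{l}_q \, S(l; r, j-1, q)$ in $\mathbb{Q}(q)$. -/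

import Mathlib

open Polynomial Finset

/-- The `q`-integer `[n] = 1 + q + ⋯ + q^(n-1)` as a polynomial in `ℤ[q]`. -/
noncomputable def qint (n : ℕ) : Polynomial ℤ := ∑ i ∈ Finset.range n, Polynomial.X ^ i

/-- The Gaussian binomial coefficient `[n choose k]_q` in `ℤ[q]`, via the `q`-Pascal rule. -/
noncomputable def qbinom : ℕ → ℕ → Polynomial ℤ
  | _, 0 => 1
  | 0, _ + 1 => 0
  | n + 1, k + 1 => qbinom n k + Polynomial.X ^ (k + 1) * qbinom n (k + 1)

/-- `S(n₁,…,n_m; r, j, q)` of the paper, evaluated at `q ∈ ℚ(q)`.  The sequence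
`n₁, …, n_m, n_{m+1}` is encoded as `n : ℕ → ℕ` (with the cyclic condition
`n (m+1) = n 1` imposed as a hypothesis in the theorems). -/
noncomputable def Sfun (q : RatFunc ℚ) (m : ℕ) (n : ℕ → ℕ) (r j : ℕ) : RatFunc ℚ :=
  (Polynomial.aeval q (qint (n 1)))⁻¹ * (Polynomial.aeval q (qbinom (n 1 + n m) (n 1)))⁻¹ *
    ∑ k ∈ Finset.Icc 1 (n 1),
      Polynomial.aeval q (qint (2 * k)) * (Polynomial.aeval q (qint k)) ^ (2 * r) *
        q ^ ((j : ℤ) * (k : ℤ) ^ 2 - ((r : ℤ) + 1) * (k : ℤ)) *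
        ∏ i ∈ Finset.Icc 1 m, Polynomial.aeval q (qbinom (n i + n (i + 1)) (n i + k))

/-!
Write `[n, k]` for `qbinom n k`. Expanding `S(l; r, j - 1)` as a sum over `k` and exchanging the
two sums reduces the theorem, for each `1 ≤ k ≤ a = n₁` (with `b = n₂`), to
`∑_{l=k}^{a} q^{l²} [a-1, l-1] [b, l] [2l, l+k] / ([l] [2l, l])
  = q^{k²} [a+b, a+k] [a+b, b+k] / ([a] [a+b, a])`,
because the weight `[2k] [k]^{2r} q^{jk² - (r+1)k}` gains exactly the factor `q^{k²}` when `j - 1`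
becomes `j`. In `q`-factorials the `l`-th term is a fixed multiple of
`q^{(l-k)(l+k)} [a-k, l-k] [b+k, b-l]`, and the `q`-Vandermonde identity sums these to
`[a+b, b-k] = [a+b, a+k]`.
-/

noncomputable def qfact : ℕ → ℤ[X]
  | 0 => 1
  | n + 1 => qfact n * qint (n + 1)

lemma qbinom_zero_right (n : ℕ) : qbinom n 0 = 1 := by cases n <;> rfl

lemma qbinom_succ_succ (n k : ℕ) :
    qbinom (n + 1) (k + 1) = qbinom n k + X ^ (k + 1) * qbinom n (k + 1) := rfl

lemma qbinom_eq_zero_of_lt : ∀ {n k : ℕ}, n < k → qbinom n k = 0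
  | 0, _ + 1, _ => rfl
  | n + 1, k + 1, h => by
    rw [qbinom_succ_succ, qbinom_eq_zero_of_lt (by omega), qbinom_eq_zero_of_lt (by omega)]
    ring

lemma qbinom_self : ∀ n : ℕ, qbinom n n = 1
  | 0 => rfl
  | n + 1 => by rw [qbinom_succ_succ, qbinom_self n, qbinom_eq_zero_of_lt n.lt_succ_self]; ring

lemma qint_add (a b : ℕ) : qint (a + b) = qint a + X ^ a * qint b := by
  simp only [qint, mul_sum, ← pow_add, sum_range_add]

lemma qbinom_add_mul_qfact_mul_qfact (k m : ℕ) :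
    qbinom (k + m) k * qfact k * qfact m = qfact (k + m) := by
  induction k generalizing m with
  | zero => simp [qbinom_zero_right, qfact]
  | succ k ihk =>
    induction m with
    | zero => simp [qbinom_self, qfact]
    | succ m ihm =>
      have ihk' := ihk (m + 1)
      rw [show k + (m + 1) = k + m + 1 by ring] at ihk'
      rw [show k + 1 + m = k + m + 1 by ring] at ihm
      rw [show k + 1 + (m + 1) = k + m + 1 + 1 by ring, qbinom_succ_succ]
      have hint : qint (k + 1) + X ^ (k + 1) * qint (m + 1) = qint (k + m + 1 + 1) := by
        rw [← qint_add]; ring_nf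
      simp only [qfact] at ihk' ihm ⊢
      linear_combination qint (k + 1) * ihk' + X ^ (k + 1) * qint (m + 1) * ihm +
        qfact (k + m) * qint (k + m + 1) * hint

lemma qfact_eval_one (n : ℕ) : (qfact n).eval 1 = n.factorial := by
  induction n with
  | zero => simp [qfact]
  | succ n ih => simp [qfact, qint, ih, Nat.factorial_succ, mul_comm]

lemma qfact_ne_zero (n : ℕ) : qfact n ≠ 0 := fun h => by
  simpa [h, Nat.factorial_ne_zero] using (qfact_eval_one n).symm

theorem qbinom_add_eq_sum_antidiagonal (m n p : ℕ) :
    qbinom (m + n) p =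
      ∑ ij ∈ antidiagonal p, X ^ (ij.1 * (n - ij.2)) * qbinom m ij.1 * qbinom n ij.2 := by
  induction n generalizing p with
  | zero =>
    cases p with
    | zero => simp [qbinom_zero_right]
    | succ p =>
      rw [Nat.sum_antidiagonal_succ']
      simp [qbinom]
  | succ n ih =>
    cases p with
    | zero => simp [qbinom_zero_right]
    | succ p =>
      have hsplit : ∀ ij ∈ antidiagonal p,
          X ^ (ij.1 * (n + 1 - (ij.2 + 1))) * qbinom m ij.1 * qbinom (n + 1) (ij.2 + 1) =
            X ^ (ij.1 * (n - ij.2)) * qbinom m ij.1 * qbinom n ij.2 +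
              X ^ (p + 1) *
                (X ^ (ij.1 * (n - (ij.2 + 1))) * qbinom m ij.1 * qbinom n (ij.2 + 1)) := by
        rintro ⟨i, j⟩ hij
        simp only [HasAntidiagonal.mem_antidiagonal] at hij
        subst hij
        rw [qbinom_succ_succ, Nat.add_sub_add_right]
        rcases lt_or_ge n (j + 1) with hn | hn
        · rw [qbinom_eq_zero_of_lt hn]; ring
        · obtain ⟨t, rfl⟩ := Nat.exists_eq_add_of_le hn
          rw [show j + 1 + t - j = t + 1 by omega, show j + 1 + t - (j + 1) = t by omega]
          ring
      rw [← add_assoc, qbinom_succ_succ, ih, ih, Nat.sum_antidiagonal_succ',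
        Nat.sum_antidiagonal_succ']
      dsimp only
      rw [sum_congr rfl hsplit, sum_add_distrib, mul_add, mul_sum]
      simp only [qbinom_zero_right, Nat.sub_zero]
      ring

section Transcendental

variable {K : Type*} [Field K] [Algebra ℤ K] {q : K}

lemma aeval_qfact_ne_zero (hq : Transcendental ℤ q) (n : ℕ) : aeval q (qfact n) ≠ 0 := by
  rw [Ne, ← map_zero (aeval (R := ℤ) q), (transcendental_iff_injective.mp hq).eq_iff]
  exact qfact_ne_zero n

lemma aeval_qbinom_of_add_eq (hq : Transcendental ℤ q) {n k m : ℕ} (h : k + m = n) :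
    aeval q (qbinom n k) = aeval q (qfact n) / (aeval q (qfact k) * aeval q (qfact m)) := by
  subst h
  rw [eq_div_iff (mul_ne_zero (aeval_qfact_ne_zero hq k) (aeval_qfact_ne_zero hq m)),
    ← map_mul, ← map_mul, ← mul_assoc, qbinom_add_mul_qfact_mul_qfact]

lemma aeval_qint_of_add_one_eq (hq : Transcendental ℤ q) {n m : ℕ} (h : m + 1 = n) :
    aeval q (qint n) = aeval q (qfact n) / aeval q (qfact m) := by
  subst h
  rw [eq_div_iff (aeval_qfact_ne_zero hq m), qfact, map_mul, mul_comm]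

lemma aeval_qbinom_symm (hq : Transcendental ℤ q) {n k m : ℕ} (h : k + m = n) :
    aeval q (qbinom n k) = aeval q (qbinom n m) := by
  rw [aeval_qbinom_of_add_eq hq h, aeval_qbinom_of_add_eq hq ((add_comm m k).trans h), mul_comm]

noncomputable def sfunWeight (q : K) (r j k : ℕ) : K :=
  aeval q (qint (2 * k)) * aeval q (qint k) ^ (2 * r) *
    q ^ ((j : ℤ) * (k : ℤ) ^ 2 - ((r : ℤ) + 1) * (k : ℤ))

lemma sfunWeight_succ (hq : q ≠ 0) (r j k : ℕ) :
    sfunWeight q r (j + 1) k = q ^ (k ^ 2) * sfunWeight q r j k := by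
  have hpow : q ^ (((j + 1 : ℕ) : ℤ) * (k : ℤ) ^ 2 - ((r : ℤ) + 1) * (k : ℤ)) =
      q ^ (k ^ 2) * q ^ ((j : ℤ) * (k : ℤ) ^ 2 - ((r : ℤ) + 1) * (k : ℤ)) := by
    rw [← zpow_natCast, ← zpow_add₀ hq]
    push_cast
    ring_nf
  rw [sfunWeight, sfunWeight, hpow]
  ring

noncomputable def centralQbinomRatio (q : K) (l k : ℕ) : K :=
  aeval q (qbinom (l + l) (l + k)) / (aeval q (qint l) * aeval q (qbinom (l + l) l))

noncomputable def qbinomPairRatio (q : K) (a b k : ℕ) : K :=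
  aeval q (qbinom (a + b) (a + k)) * aeval q (qbinom (a + b) (b + k)) /
    (aeval q (qint a) * aeval q (qbinom (a + b) a))

-- The last factor is written exactly as the `j`-th term of the `q`-Vandermonde sum
-- `qbinom_add_eq_sum_antidiagonal (a - k) (b + k) (b - k)`.
lemma pow_sq_mul_centralQbinomRatio_eq (hq : Transcendental ℤ q) {a b k j : ℕ} (hk : 1 ≤ k)
    (hka : k ≤ a) (hjb : k + j ≤ b) :
    q ^ ((k + j) ^ 2) * aeval q (qbinom (a - 1) (k + j - 1)) * aeval q (qbinom b (k + j)) *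
        centralQbinomRatio q (k + j) k =
      q ^ (k ^ 2) * (aeval q (qbinom (a + b) (b + k)) /
          (aeval q (qint a) * aeval q (qbinom (a + b) a))) *
        (q ^ (j * (b + k - (b - k - j))) * aeval q (qbinom (a - k) j) *
          aeval q (qbinom (b + k) (b - k - j))) := by
  rcases lt_or_ge (a - k) j with hja | hja
  · rw [qbinom_eq_zero_of_lt (show a - 1 < k + j - 1 by omega), qbinom_eq_zero_of_lt hja]
    simp
  have hf := aeval_qfact_ne_zero hq
  rw [centralQbinomRatio, show b + k - (b - k - j) = 2 * k + j by omega,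
    aeval_qbinom_of_add_eq hq (show (k + j - 1) + (a - k - j) = a - 1 by omega),
    aeval_qbinom_of_add_eq hq (show (k + j) + (b - k - j) = b by omega),
    aeval_qbinom_of_add_eq hq (show (k + j + k) + j = (k + j) + (k + j) by omega),
    aeval_qbinom_of_add_eq hq (show (k + j) + (k + j) = (k + j) + (k + j) by omega),
    aeval_qbinom_of_add_eq hq (show (b + k) + (a - k) = a + b by omega),
    aeval_qbinom_of_add_eq hq (show a + b = a + b from rfl),
    aeval_qbinom_of_add_eq hq (show j + (a - k - j) = a - k by omega),
    aeval_qbinom_of_add_eq hq (show (b - k - j) + (k + j + k) = b + k by omega),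
    aeval_qint_of_add_one_eq hq (show (k + j - 1) + 1 = k + j by omega),
    aeval_qint_of_add_one_eq hq (show (a - 1) + 1 = a by omega)]
  field_simp [hf]
  ring

theorem sum_Icc_pow_sq_mul_centralQbinomRatio (hq : Transcendental ℤ q) {a b k : ℕ}
    (hk : 1 ≤ k) (hka : k ≤ a) :
    ∑ l ∈ Icc k a, q ^ (l ^ 2) * aeval q (qbinom (a - 1) (l - 1)) * aeval q (qbinom b l) *
        centralQbinomRatio q l k =
      q ^ (k ^ 2) * qbinomPairRatio q a b k := by
  set T : ℕ → K := fun l => q ^ (l ^ 2) * aeval q (qbinom (a - 1) (l - 1)) *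
    aeval q (qbinom b l) * centralQbinomRatio q l k
  rcases lt_or_ge b k with hbk | hkb
  · rw [qbinomPairRatio, qbinom_eq_zero_of_lt (show a + b < a + k by omega)]
    refine (sum_eq_zero fun l hl => ?_).trans (by simp)
    rw [mem_Icc] at hl
    simp [qbinom_eq_zero_of_lt (show b < l by omega)]
  have hT0 : ∀ j ≥ min a b + 1 - k, T (k + j) = 0 := by
    intro j hj
    rcases le_or_gt (k + j) a with hja | hja
    · simp [T, qbinom_eq_zero_of_lt (show b < k + j by omega)]
    · simp [T, qbinom_eq_zero_of_lt (show a - 1 < k + j - 1 by omega)]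
  have hvdm := congrArg (aeval q) (qbinom_add_eq_sum_antidiagonal (a - k) (b + k) (b - k))
  simp only [Nat.sum_antidiagonal_eq_sum_range_succ_mk, map_sum, map_mul, map_pow, aeval_X,
    show a - k + (b + k) = a + b by omega] at hvdm
  calc ∑ l ∈ Icc k a, T l = ∑ j ∈ range (a + 1 - k), T (k + j) := by
        rw [← Ico_add_one_right_eq_Icc, sum_Ico_eq_sum_range]
    _ = ∑ j ∈ range (b + 1 - k), T (k + j) :=
        (eventually_constant_sum hT0 (by omega)).trans (eventually_constant_sum hT0 (by omega)).symm
    _ = ∑ j ∈ range (b - k + 1), q ^ (k ^ 2) * (aeval q (qbinom (a + b) (b + k)) /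
          (aeval q (qint a) * aeval q (qbinom (a + b) a))) *
          (q ^ (j * (b + k - (b - k - j))) * aeval q (qbinom (a - k) j) *
            aeval q (qbinom (b + k) (b - k - j))) := by
        refine sum_congr (by congr 1; omega) fun j hj => ?_
        exact pow_sq_mul_centralQbinomRatio_eq hq hk hka (by rw [mem_range] at hj; omega)
    _ = q ^ (k ^ 2) * (aeval q (qbinom (a + b) (b + k)) /
          (aeval q (qint a) * aeval q (qbinom (a + b) a))) * aeval q (qbinom (a + b) (b - k)) := by
        rw [← mul_sum, hvdm]
    _ = q ^ (k ^ 2) * qbinomPairRatio q a b k := by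
        rw [aeval_qbinom_symm hq (show b - k + (a + k) = a + b by omega), qbinomPairRatio]
        ring

end Transcendental

lemma Sfun_one (q : RatFunc ℚ) (l r j : ℕ) :
    Sfun q 1 (fun _ => l) r j =
      ∑ k ∈ Icc 1 l, sfunWeight q r j k * centralQbinomRatio q l k := by
  rw [Sfun, mul_sum]
  refine sum_congr rfl fun k _ => ?_
  rw [Icc_self, prod_singleton, sfunWeight, centralQbinomRatio]
  ring

lemma Sfun_two (q : RatFunc ℚ) (a b r j : ℕ) :
    Sfun q 2 (fun i => if i = 2 then b else a) r j =
      ∑ k ∈ Icc 1 a, sfunWeight q r j k * qbinomPairRatio q a b k := by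
  rw [Sfun, mul_sum]
  refine sum_congr rfl fun k _ => ?_
  rw [show Icc 1 2 = {1, 2} from rfl, prod_pair (by decide), sfunWeight, qbinomPairRatio]
  simp only [if_pos, show (1 : ℕ) ≠ 2 by decide, show (2 + 1 : ℕ) ≠ 2 by decide, if_false,
    add_comm b a]
  ring

lemma transcendental_ratFunc_X : Transcendental ℤ (RatFunc.X : RatFunc ℚ) := by
  rw [← RatFunc.algebraMap_X, transcendental_algebraMap_iff (RatFunc.algebraMap_injective ℚ)]
  exact (Polynomial.transcendental_X ℚ).restrictScalars Int.cast_injective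

theorem stmt_15_general (n₁ n₂ : ℕ) (r j : ℕ) (hj : 1 ≤ j) :
    Sfun (RatFunc.X : RatFunc ℚ) 2 (fun i => if i = 2 then n₂ else n₁) r j
      = ∑ l ∈ Finset.Icc 1 n₁,
          (RatFunc.X : RatFunc ℚ) ^ (l ^ 2) *
            Polynomial.aeval (RatFunc.X : RatFunc ℚ) (qbinom (n₁ - 1) (l - 1)) *
            Polynomial.aeval (RatFunc.X : RatFunc ℚ) (qbinom n₂ l) *
            Sfun (RatFunc.X : RatFunc ℚ) 1 (fun _ => l) r (j - 1) := by
  obtain ⟨j, rfl⟩ : ∃ i, j = i + 1 := ⟨j - 1, by omega⟩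
  simp only [Sfun_two, Sfun_one, mul_sum, Nat.add_sub_cancel]
  rw [sum_comm' (t' := Icc 1 n₁) (s' := fun k => Icc k n₁)
    (by intros; simp only [mem_Icc]; omega)]
  refine sum_congr rfl fun k hk => ?_
  rw [mem_Icc] at hk
  rw [sfunWeight_succ RatFunc.X_ne_zero, mul_right_comm, ← sum_Icc_pow_sq_mul_centralQbinomRatio
    transcendental_ratFunc_X hk.1 hk.2, sum_mul]
  exact sum_congr rfl fun l _ => by ring

theorem stmt_15 (n₁ n₂ : ℕ) (hn₁ : 0 < n₁) (hn₂ : 0 < n₂) (r j : ℕ) (hj : 1 ≤ j) :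
    Sfun (RatFunc.X : RatFunc ℚ) 2 (fun i => if i = 2 then n₂ else n₁) r j
      = ∑ l ∈ Finset.Icc 1 n₁,
          (RatFunc.X : RatFunc ℚ) ^ (l ^ 2) *
            Polynomial.aeval (RatFunc.X : RatFunc ℚ) (qbinom (n₁ - 1) (l - 1)) *
            Polynomial.aeval (RatFunc.X : RatFunc ℚ) (qbinom n₂ l) *
            Sfun (RatFunc.X : RatFunc ℚ) 1 (fun _ => l) r (j - 1) :=
  stmt_15_general n₁ n₂ r j hj
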